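/- Let (S, ·, 𝔪) be a measurable semigroup with S infinite and all finite subsets of S in 𝔪. Then S* = 𝔪^β \ e(S) (the non-principal 𝔪-ultrafilters) is a left ideal of (𝔪^β, ·) if and only if S is weakly left cancellative, i.e., for every x, y ∈ S the set {t ∈ S : x·t = y} is finite. -/

import Mathlib

open Set

def IsMFilter {X : Type*} [MeasurableSpace X] (p : Set (Set X)) : Prop :=
  (∀ A ∈ p, MeasurableSet A) ∧ ∅ ∉ p ∧ Set.univ ∈ p ∧
  (∀ A ∈ p, ∀ B : Set X, MeasurableSet B → A ⊆ B → B ∈ p) ∧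
  (∀ A ∈ p, ∀ B ∈ p, A ∩ B ∈ p)

def IsMUltrafilter {X : Type*} [MeasurableSpace X] (p : Set (Set X)) : Prop :=
  IsMFilter p ∧ ∀ q : Set (Set X), IsMFilter q → p ⊆ q → q = p

def MUltra (X : Type*) [MeasurableSpace X] : Type _ :=
  {p : Set (Set X) // IsMUltrafilter p}

def hatSet {X : Type*} [MeasurableSpace X] (A : Set X) : Set (MUltra X) :=
  {p | A ∈ p.1}

instance {X : Type*} [MeasurableSpace X] : TopologicalSpace (MUltra X) :=
  TopologicalSpace.generateFrom {U | ∃ A : Set X, MeasurableSet A ∧ U = hatSet A}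

instance {X : Type*} [MeasurableSpace X] : MeasurableSpace (MUltra X) :=
  MeasurableSpace.generateFrom {U | ∃ A : Set X, MeasurableSet A ∧ U = hatSet A}

def principalUF {X : Type*} [MeasurableSpace X] (x : X) : Set (Set X) :=
  {A | MeasurableSet A ∧ x ∈ A}

theorem principalUF_ultra {X : Type*} [MeasurableSpace X] (x : X) :
    IsMUltrafilter (principalUF x) := by
  constructor
  · refine ⟨fun A hA => hA.1, ?_, ⟨MeasurableSet.univ, trivial⟩, ?_, ?_⟩
    · intro h; exact h.2
    · intro A hA B hB hAB; exact ⟨hB, hAB hA.2⟩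
    · intro A hA B hB; exact ⟨hA.1.inter hB.1, hA.2, hB.2⟩
  · intro q hq hpq
    refine Set.Subset.antisymm ?_ hpq
    intro A hAq
    have hAm : MeasurableSet A := hq.1 A hAq
    by_contra hx
    have hxc : x ∈ Aᶜ := fun h => hx ⟨hAm, h⟩
    have hcq : Aᶜ ∈ q := hpq ⟨hAm.compl, hxc⟩
    have hint : A ∩ Aᶜ ∈ q := hq.2.2.2.2 A hAq Aᶜ hcq
    rw [Set.inter_compl_self] at hint
    exact hq.2.1 hint

def princ {X : Type*} [MeasurableSpace X] (x : X) : MUltra X :=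
  ⟨principalUF x, principalUF_ultra x⟩

/-
The product `p · q` contains `{y}` exactly when `p`-many `s` have `{t | s * t = y} ∈ q`. If all
these fibres are finite, a non-principal `q` contains none of them, so `p · q` is again
non-principal. If some fibre `T = {t | x * t = y}` is infinite, extend the filter of measurable
sets cofinite in `T` to an `𝔪`-ultrafilter `q`: it is non-principal and does not contain `Tᶜ`,
so `{y}ᶜ ∉ e(x) · q`, which forces `e(x) · q = e(y)`.
-/

section
variable {X : Type*} [MeasurableSpace X]

namespace IsMFilter
variable {p : Set (Set X)} {A B : Set X}

theorem measurableSet (hp : IsMFilter p) (hA : A ∈ p) : MeasurableSet A := hp.1 A hA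

theorem empty_notMem (hp : IsMFilter p) : ∅ ∉ p := hp.2.1

theorem univ_mem (hp : IsMFilter p) : univ ∈ p := hp.2.2.1

theorem mem_of_superset (hp : IsMFilter p) (hA : A ∈ p) (hB : MeasurableSet B) (hAB : A ⊆ B) :
    B ∈ p :=
  hp.2.2.2.1 A hA B hB hAB

theorem inter_mem (hp : IsMFilter p) (hA : A ∈ p) (hB : B ∈ p) : A ∩ B ∈ p :=
  hp.2.2.2.2 A hA B hB

theorem nonempty_of_mem (hp : IsMFilter p) (hA : A ∈ p) : A.Nonempty :=
  nonempty_iff_ne_empty.2 fun h => hp.empty_notMem (h ▸ hA)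

theorem sUnion_of_isChain {c : Set (Set (Set X))} (hc : ∀ p ∈ c, IsMFilter p)
    (hchain : IsChain (· ⊆ ·) c) (hne : c.Nonempty) : IsMFilter (⋃₀ c) := by
  obtain ⟨p₀, hp₀⟩ := hne
  refine ⟨?_, ?_, ⟨p₀, hp₀, (hc p₀ hp₀).univ_mem⟩, ?_, ?_⟩
  · rintro A ⟨p, hp, hA⟩
    exact (hc p hp).measurableSet hA
  · rintro ⟨p, hp, hempty⟩
    exact (hc p hp).empty_notMem hempty
  · rintro A ⟨p, hp, hA⟩ B hB hAB
    exact ⟨p, hp, (hc p hp).mem_of_superset hA hB hAB⟩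
  · rintro A ⟨p, hp, hA⟩ B ⟨p', hp', hB⟩
    rcases hchain.total hp hp' with h | h
    · exact ⟨p', hp', (hc p' hp').inter_mem (h hA) hB⟩
    · exact ⟨p, hp, (hc p hp).inter_mem hA (h hB)⟩

end IsMFilter

theorem exists_isMUltrafilter_superset {p : Set (Set X)} (hp : IsMFilter p) :
    ∃ q, p ⊆ q ∧ IsMUltrafilter q := by
  obtain ⟨q, hpq, hq⟩ := zorn_subset_nonempty {q : Set (Set X) | IsMFilter q}
    (fun c hc hchain hne => ⟨⋃₀ c, IsMFilter.sUnion_of_isChain hc hchain hne,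
      fun _ => subset_sUnion_of_mem⟩) p hp
  exact ⟨q, hpq, hq.1, fun q' hq' hqq' => (hq.2 hq' hqq').antisymm hqq'⟩

def cofiniteOn (T : Set X) : Set (Set X) :=
  {A | MeasurableSet A ∧ (T \ A).Finite}

theorem isMFilter_cofiniteOn {T : Set X} (hT : T.Infinite) : IsMFilter (cofiniteOn T) := by
  refine ⟨fun A hA => hA.1, ?_, ⟨MeasurableSet.univ, by simp⟩, ?_, ?_⟩
  · rintro ⟨-, hfin⟩
    exact hT (by simpa using hfin)
  · rintro A ⟨-, hA⟩ B hB hAB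
    exact ⟨hB, hA.subset (sdiff_subset_sdiff_right hAB)⟩
  · rintro A ⟨hAm, hA⟩ B ⟨hBm, hB⟩
    exact ⟨hAm.inter hBm, by simpa only [sdiff_inter] using hA.union hB⟩

namespace MUltra

theorem isMFilter (r : MUltra X) : IsMFilter r.1 := r.2.1

theorem mem_or_compl_mem (r : MUltra X) {A : Set X} (hA : MeasurableSet A) :
    A ∈ r.1 ∨ Aᶜ ∈ r.1 := by
  refine or_iff_not_imp_right.2 fun hAc => ?_
  -- Adjoining `A` to `r` yields a proper `𝔪`-filter, which by maximality is `r` itself.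
  let q : Set (Set X) := {B | MeasurableSet B ∧ ∃ C ∈ r.1, A ∩ C ⊆ B}
  have hq : IsMFilter q := by
    refine ⟨fun B hB => hB.1, ?_, ⟨MeasurableSet.univ, univ, r.isMFilter.univ_mem,
      subset_univ _⟩, ?_, ?_⟩
    · rintro ⟨-, C, hC, hAC⟩
      refine hAc (r.isMFilter.mem_of_superset hC hA.compl fun x hxC hxA => ?_)
      exact hAC ⟨hxA, hxC⟩
    · rintro B ⟨-, C, hC, hACB⟩ D hD hBD
      exact ⟨hD, C, hC, hACB.trans hBD⟩
    · rintro B ⟨hBm, C, hC, hACB⟩ B' ⟨hB'm, C', hC', hACB'⟩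
      refine ⟨hBm.inter hB'm, C ∩ C', r.isMFilter.inter_mem hC hC', fun x hx => ?_⟩
      exact ⟨hACB ⟨hx.1, hx.2.1⟩, hACB' ⟨hx.1, hx.2.2⟩⟩
  have hrq : r.1 ⊆ q := fun C hC => ⟨r.isMFilter.measurableSet hC, C, hC, inter_subset_right⟩
  rw [← r.2.2 q hq hrq]
  exact ⟨hA, univ, r.isMFilter.univ_mem, inter_subset_left⟩

theorem eq_princ_of_singleton_mem (r : MUltra X) {y : X} (hy : {y} ∈ r.1) : r = princ y := by
  have hsub : r.1 ⊆ principalUF y := fun A hA => by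
    obtain ⟨x, hxA, rfl⟩ := r.isMFilter.nonempty_of_mem (r.isMFilter.inter_mem hA hy)
    exact ⟨r.isMFilter.measurableSet hA, hxA⟩
  exact Subtype.ext (r.2.2 _ (principalUF_ultra y).1 hsub).symm

theorem compl_singleton_mem (r : MUltra X) (hr : r ∉ range princ) {s : X}
    (hs : MeasurableSet {s}) : {s}ᶜ ∈ r.1 :=
  (r.mem_or_compl_mem hs).resolve_left fun h => hr ⟨s, (r.eq_princ_of_singleton_mem h).symm⟩

theorem finite_notMem (hfin : ∀ F : Set X, F.Finite → MeasurableSet F) (r : MUltra X)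
    (hr : r ∉ range princ) {F : Set X} (hF : F.Finite) : F ∉ r.1 := by
  induction F, hF using Set.Finite.induction_on with
  | empty => exact r.isMFilter.empty_notMem
  | @insert a F _ hF ih =>
    intro haF
    have hmem := r.isMFilter.inter_mem haF
      (r.compl_singleton_mem hr (hfin _ (finite_singleton a)))
    refine ih (r.isMFilter.mem_of_superset hmem (hfin F hF) ?_)
    rintro x ⟨rfl | hx, hxa⟩
    · exact absurd rfl hxa
    · exact hx

end MUltra

theorem exists_nonprincipal_compl_notMem (hfin : ∀ F : Set X, F.Finite → MeasurableSet F)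
    {T : Set X} (hT : T.Infinite) :
    ∃ q : MUltra X, q ∉ range princ ∧ Tᶜ ∉ q.1 := by
  obtain ⟨M, hTM, hM⟩ := exists_isMUltrafilter_superset (isMFilter_cofiniteOn hT)
  refine ⟨⟨M, hM⟩, ?_, fun hTc => ?_⟩
  · rintro ⟨s, hs⟩
    have hsc : {s}ᶜ ∈ M :=
      hTM ⟨(hfin _ (finite_singleton s)).compl, (finite_singleton s).subset (by simp)⟩
    have hMs : M = principalUF s := congrArg Subtype.val hs.symm
    exact (hMs ▸ hsc).2 rfl
  · have hT : T ∈ M := hTM ⟨compl_compl T ▸ (hM.1.measurableSet hTc).compl, by simp⟩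
    exact hM.1.empty_notMem (inter_compl_self T ▸ hM.1.inter_mem hT hTc)

end

theorem stmt19_general {S : Type*} [Semigroup S] [MeasurableSpace S]
    (hfin : ∀ F : Set S, F.Finite → MeasurableSet F)
    (mul : MUltra S → MUltra S → MUltra S)
    (hmuldef : ∀ p q : MUltra S, (mul p q).1 =
      {A : Set S | MeasurableSet A ∧ {s : S | {t : S | s * t ∈ A} ∈ q.1} ∈ p.1}) :
    (∀ q : MUltra S, q ∉ Set.range (princ : S → MUltra S) →
        ∀ p : MUltra S, mul p q ∉ Set.range (princ : S → MUltra S)) ↔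
      ∀ x y : S, {t : S | x * t = y}.Finite := by
  constructor
  · intro hideal x y
    by_contra hinf
    obtain ⟨q, hq, hTc⟩ := exists_nonprincipal_compl_notMem hfin hinf
    have hy := (mul (princ x) q).compl_singleton_mem (hideal q hq (princ x))
      (hfin _ (finite_singleton y))
    rw [hmuldef] at hy
    exact hTc hy.2.2
  · rintro hwlc q hq p ⟨y, hy⟩
    have hy' : {y} ∈ (mul p q).1 := hy ▸ ⟨hfin _ (finite_singleton y), rfl⟩
    rw [hmuldef] at hy'
    obtain ⟨x, hx⟩ := p.isMFilter.nonempty_of_mem hy'.2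
    exact q.finite_notMem hfin hq (hwlc x y) hx

theorem stmt19 {S : Type*} [Semigroup S] [MeasurableSpace S] [Infinite S]
    (hmul : Measurable fun x : S × S => x.1 * x.2)
    (hfin : ∀ F : Set S, F.Finite → MeasurableSet F)
    (mul : MUltra S → MUltra S → MUltra S)
    (hmuldef : ∀ p q : MUltra S, (mul p q).1 =
      {A : Set S | MeasurableSet A ∧ {s : S | {t : S | s * t ∈ A} ∈ q.1} ∈ p.1}) :
    (∀ q : MUltra S, q ∉ Set.range (princ : S → MUltra S) →
        ∀ p : MUltra S, mul p q ∉ Set.range (princ : S → MUltra S)) ↔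
      ∀ x y : S, {t : S | x * t = y}.Finite :=
  stmt19_general hfin mul hmuldef
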